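/- Let L: ℝⁿ → [0,∞) be a continuously differentiable solution of the stationary HJB equation f·∇L + ½|gᵀ∇L|² = 0 with L(0) = 0, and let L be continuous at 0. Let u: (−∞,0] → ℝᵐ be continuous with ∫_{−∞}^0 |u(s)|² ds < ∞, and let x: (−∞,0] → ℝⁿ be differentiable with x′(s) = f(x(s)) + g(x(s))u(s) for all s, lim_{t→−∞} x(t) = 0, and x(0) = y. Then L(y) ≤ ½∫_{−∞}^0 |u(s)|² ds; i.e., L is a lower bound for the control energy needed to steer the system from 0 to y. -/

import Mathlib

/-!
Along the trajectory, the chain rule and the HJB equation give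
`d/ds L(x(s)) = ∇L·(f + g u) = -½|gᵀ∇L|² + (gᵀ∇L)·u ≤ ½|u|²`, by Young's inequality.
Integrating over `[t, 0]` yields `L(y) - L(x(t)) ≤ ½∫_t^0 |u|²`, and letting `t → -∞`,
`L(x(t)) → L(0) = 0`.
-/

open Matrix MeasureTheory Filter

/-- The continuous linear map `v ↦ a ⬝ᵥ v`, representing the differential of a scalar
function with gradient vector `a`. -/
noncomputable def dotCLM {n : ℕ} (a : Fin n → ℝ) : (Fin n → ℝ) →L[ℝ] ℝ :=
  LinearMap.toContinuousLinearMap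
    { toFun := fun v => a ⬝ᵥ v
      map_add' := by intro v w; simp [dotProduct_add]
      map_smul' := by intro c v; simp [dotProduct_smul] }

theorem dotProduct_le_half_self_add_half_self {ι : Type*} [Fintype ι] (a b : ι → ℝ) :
    a ⬝ᵥ b ≤ (1/2) * (a ⬝ᵥ a) + (1/2) * (b ⬝ᵥ b) := by
  simp only [dotProduct, Finset.mul_sum, ← Finset.sum_add_distrib]
  exact Finset.sum_le_sum fun i _ => by nlinarith [sq_nonneg (a i - b i)]

theorem dotProduct_add_mulVec_le_of_hjb {ι κ : Type*} [Fintype ι] [Fintype κ]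
    (p v : ι → ℝ) (G : Matrix ι κ ℝ) (w : κ → ℝ)
    (hHJB : v ⬝ᵥ p + (1/2) * ((Gᵀ *ᵥ p) ⬝ᵥ (Gᵀ *ᵥ p)) = 0) :
    p ⬝ᵥ (v + G *ᵥ w) ≤ (1/2) * (w ⬝ᵥ w) := by
  have hG : p ⬝ᵥ (G *ᵥ w) = (Gᵀ *ᵥ p) ⬝ᵥ w := by
    rw [dotProduct_mulVec, mulVec_transpose]
  rw [dotProduct_add, hG, dotProduct_comm p v]
  linarith [dotProduct_le_half_self_add_half_self (Gᵀ *ᵥ p) w]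

theorem sub_le_integral_Iic_of_hasDerivAt_le {V V' w : ℝ → ℝ} {b c : ℝ}
    (hV : ∀ s ≤ b, HasDerivAt V (V' s) s) (hV'w : ∀ s ≤ b, V' s ≤ w s)
    (hw : IntegrableOn w (Set.Iic b)) (hlim : Tendsto V atBot (nhds c)) :
    V b - c ≤ ∫ s in Set.Iic b, w s := by
  have hstep : ∀ t ≤ b, V b - V t ≤ ∫ s in t..b, w s := fun t htb =>
    intervalIntegral.sub_le_integral_of_hasDeriv_right_of_le htb
      (fun s hs => (hV s hs.2).continuousAt.continuousWithinAt)
      (fun s hs => (hV s hs.2.le).hasDerivWithinAt)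
      (hw.mono_set Set.Icc_subset_Iic_self) (fun s hs => hV'w s hs.2.le)
  exact le_of_tendsto_of_tendsto (tendsto_const_nhds.sub hlim)
    (intervalIntegral_tendsto_integral_Iic b hw tendsto_id)
    (eventually_atBot.2 ⟨b, hstep⟩)

theorem controllability_function_lower_bound_general
    (n m : ℕ)
    (f : (Fin n → ℝ) → (Fin n → ℝ)) (g : (Fin n → ℝ) → Matrix (Fin n) (Fin m) ℝ)
    (L : (Fin n → ℝ) → ℝ) (gradL : (Fin n → ℝ) → (Fin n → ℝ))
    -- `L` is continuously differentiable with gradient `gradL`: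
    (hLdiff : ∀ x, HasFDerivAt L (dotCLM (gradL x)) x)
    -- `L` solves the stationary HJB equation with `L(0) = 0`:
    (hHJB : ∀ x, f x ⬝ᵥ gradL x
      + (1/2) * (((g x)ᵀ *ᵥ gradL x) ⬝ᵥ ((g x)ᵀ *ᵥ gradL x)) = 0)
    (hL0 : L 0 = 0)
    -- a continuous, square-integrable control on `(-∞,0]`:
    (u : ℝ → Fin m → ℝ)
    (huL2 : IntegrableOn (fun s => u s ⬝ᵥ u s) (Set.Iic (0 : ℝ)))
    -- a corresponding trajectory steering `0` (at time `-∞`) to `y` (at time `0`):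
    (x : ℝ → Fin n → ℝ) (y : Fin n → ℝ)
    (hx : ∀ s ∈ Set.Iic (0 : ℝ), HasDerivAt x (f (x s) + (g (x s)) *ᵥ u s) s)
    (hx0 : Tendsto x atBot (nhds 0))
    (hxy : x 0 = y) :
    L y ≤ (1/2) * ∫ s in Set.Iic (0 : ℝ), u s ⬝ᵥ u s := by
  have hLx : Tendsto (fun s => L (x s)) atBot (nhds 0) :=
    hL0 ▸ (hLdiff 0).continuousAt.tendsto.comp hx0
  have key := sub_le_integral_Iic_of_hasDerivAt_le
    (fun s hs => (hLdiff (x s)).comp_hasDerivAt s (hx s hs))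
    (fun s _ => dotProduct_add_mulVec_le_of_hjb _ _ _ (u s) (hHJB (x s)))
    (huL2.const_mul (1/2)) hLx
  rwa [integral_const_mul, Function.comp_apply, hxy, sub_zero] at key

/-- A nonnegative `C¹` solution `L` of the stationary HJB equation
`f·∇L + ½|gᵀ∇L|² = 0`, `L(0) = 0`, is a lower bound for the control energy
needed to steer the system `ẋ = f(x) + g(x)u` from `0` (at time `-∞`) to `y` (at time `0`):
`L(y) ≤ ½∫_{-∞}^0 |u(s)|² ds`. -/
theorem controllability_function_lower_bound
    (n m : ℕ)
    (f : (Fin n → ℝ) → (Fin n → ℝ)) (g : (Fin n → ℝ) → Matrix (Fin n) (Fin m) ℝ)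
    (L : (Fin n → ℝ) → ℝ) (gradL : (Fin n → ℝ) → (Fin n → ℝ))
    (hLnonneg : ∀ x, 0 ≤ L x)
    -- `L` is continuously differentiable with gradient `gradL`:
    (hLdiff : ∀ x, HasFDerivAt L (dotCLM (gradL x)) x)
    (hLC1 : Continuous gradL)
    -- `L` solves the stationary HJB equation with `L(0) = 0`:
    (hHJB : ∀ x, f x ⬝ᵥ gradL x
      + (1/2) * (((g x)ᵀ *ᵥ gradL x) ⬝ᵥ ((g x)ᵀ *ᵥ gradL x)) = 0)
    (hL0 : L 0 = 0)
    (hLcont : ContinuousAt L 0)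
    -- a continuous, square-integrable control on `(-∞,0]`:
    (u : ℝ → Fin m → ℝ) (hu : ContinuousOn u (Set.Iic (0 : ℝ)))
    (huL2 : IntegrableOn (fun s => u s ⬝ᵥ u s) (Set.Iic (0 : ℝ)))
    -- a corresponding trajectory steering `0` (at time `-∞`) to `y` (at time `0`):
    (x : ℝ → Fin n → ℝ) (y : Fin n → ℝ)
    (hx : ∀ s ∈ Set.Iic (0 : ℝ), HasDerivAt x (f (x s) + (g (x s)) *ᵥ u s) s)
    (hx0 : Tendsto x atBot (nhds 0))
    (hxy : x 0 = y) :
    L y ≤ (1/2) * ∫ s in Set.Iic (0 : ℝ), u s ⬝ᵥ u s :=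
  controllability_function_lower_bound_general n m f g L gradL hLdiff hHJB hL0 u huL2 x y hx hx0 hxy
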